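/- Fix an integer m ≥ 2 and let B_j = {n ∈ ℕ : d_j ∣ n and exp(j^m) ≤ n < exp((j+1)^m)}. There exist a constant C > 0 and a positive integer j₀ such that for all sufficiently large x the following holds: if ℓ is the unique integer with exp(ℓ^m) ≤ x < exp((ℓ+1)^m) and s is any integer with j₀ ≤ s ≤ ℓ, then the number of pairs (p,b) with p a prime satisfying p ≤ p_ℓ, b ∈ B_j for some s ≤ j ≤ ℓ, and p + b ≤ x, is at most C·x·(log x)^{2/m}·exp(−(1/(2m))·(log x)^{1/m}·log log x). -/

import Mathlib

open Filter Real

/-- `dPrimorial j = p_1 p_2 ⋯ p_j`, the product of the first `j` primes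
(`Nat.nth Nat.Prime i` is the `(i+1)`-st prime, so `p_j = Nat.nth Nat.Prime (j-1)`). -/
noncomputable def dPrimorial (j : ℕ) : ℕ := ∏ i ∈ Finset.range j, Nat.nth Nat.Prime i

/-- `Bset m j = {n ∈ ℕ : d_j ∣ n and exp(j^m) ≤ n < exp((j+1)^m)}`. -/
def Bset (m j : ℕ) : Set ℕ :=
  {n : ℕ | dPrimorial j ∣ n ∧
    Real.exp ((j : ℝ) ^ m) ≤ (n : ℝ) ∧ (n : ℝ) < Real.exp (((j : ℝ) + 1) ^ m)}

section aux

lemma stmt13_pow_self_le (n : ℕ) : (n:ℝ)^n ≤ Real.exp 1 ^ n * n.factorial := by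
  induction n with
  | zero => simp
  | succ n ih =>
    have hstep : ((n:ℝ)+1)^n ≤ Real.exp 1 * (n:ℝ)^n := by
      rcases Nat.eq_zero_or_pos n with h0 | hn
      · subst h0; simpa using Real.one_le_exp (by norm_num)
      · have hnpos : (0:ℝ) < n := by exact_mod_cast hn
        have h1 : (n:ℝ) + 1 = n * (1 + 1/n) := by field_simp
        have h2 : (1 + 1/(n:ℝ))^n ≤ Real.exp 1 := by
          have := Real.add_one_le_exp (1/(n:ℝ))
          calc (1 + 1/(n:ℝ))^n ≤ (Real.exp (1/n))^n := by
                apply pow_le_pow_left₀ (by positivity); linarith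
            _ = Real.exp 1 := by
                rw [← Real.exp_nat_mul, mul_one_div, div_self hnpos.ne']
        calc ((n:ℝ)+1)^n = (n:ℝ)^n * (1+1/n)^n := by rw [h1, mul_pow]
          _ ≤ (n:ℝ)^n * Real.exp 1 := by
              apply mul_le_mul_of_nonneg_left h2 (by positivity)
          _ = Real.exp 1 * (n:ℝ)^n := by ring
    have hnn : (0:ℝ) ≤ (n:ℝ)+1 := by positivity
    have hcast : ((n+1 : ℕ) : ℝ) = (n:ℝ)+1 := by push_cast; ring
    rw [hcast]
    calc ((n:ℝ)+1)^(n+1) = ((n:ℝ)+1)^n * ((n:ℝ)+1) := by ring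
      _ ≤ (Real.exp 1 * (n:ℝ)^n) * ((n:ℝ)+1) := by
          apply mul_le_mul_of_nonneg_right hstep hnn
      _ ≤ (Real.exp 1 * (Real.exp 1 ^ n * n.factorial)) * ((n:ℝ)+1) := by
          apply mul_le_mul_of_nonneg_right _ hnn
          exact mul_le_mul_of_nonneg_left ih (Real.exp_pos 1).le
      _ = Real.exp 1 ^ (n+1) * (n+1).factorial := by
          rw [Nat.factorial_succ]; push_cast; ring

lemma stmt13_exp_le_factorial (n : ℕ) :
    Real.exp ((n:ℝ) * (Real.log n - 1)) ≤ (n.factorial : ℝ) := by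
  have hpow := stmt13_pow_self_le n
  rcases Nat.eq_zero_or_pos n with h0 | hn
  · subst h0; simp
  · have hnpos : (0:ℝ) < n := by exact_mod_cast hn
    have h1 : Real.exp ((n:ℝ) * Real.log n) = (n:ℝ)^n := by
      rw [Real.exp_nat_mul, Real.exp_log hnpos]
    have h2 : Real.exp ((n:ℝ) * (Real.log n - 1)) * Real.exp 1 ^ n = (n:ℝ)^n := by
      rw [← h1, ← Real.exp_nat_mul, ← Real.exp_add]; ring_nf
    have hepos : (0:ℝ) < Real.exp 1 ^ n := by positivity
    rw [← h2] at hpow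
    exact le_of_mul_le_mul_right
      (by linarith [mul_comm (Real.exp ((n:ℝ) * (Real.log n - 1))) (Real.exp 1 ^ n)]) hepos

lemma stmt13_nth_prime_ge (i : ℕ) : i + 2 ≤ Nat.nth Nat.Prime i := by
  induction i with
  | zero => simpa using (Nat.prime_nth_prime 0).two_le
  | succ i ih =>
    have h : Nat.nth Nat.Prime i < Nat.nth Nat.Prime (i+1) :=
      (Nat.nth_lt_nth Nat.infinite_setOf_prime).2 (Nat.lt_succ_self i)
    omega

lemma stmt13_factorial_le_dPrimorial (j : ℕ) : (j+1).factorial ≤ dPrimorial j := by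
  have h : ∀ k : ℕ, (k+1).factorial = ∏ i ∈ Finset.range k, (i+2) := by
    intro k
    induction k with
    | zero => simp
    | succ k ih => rw [Finset.prod_range_succ, ← ih, Nat.factorial_succ]; ring
  rw [h, dPrimorial]
  exact Finset.prod_le_prod' fun i _ => stmt13_nth_prime_ge i

lemma stmt13_dPrimorial_pos (j : ℕ) : 0 < dPrimorial j :=
  lt_of_lt_of_le (Nat.factorial_pos _) (stmt13_factorial_le_dPrimorial j)

lemma stmt13_log_facts {l : ℝ} (hl : 150 ≤ l) :
    5 ≤ Real.log l ∧ Real.log (l+1) ≤ Real.log l + 1 ∧ Real.log l ≤ l/54 + 3 := by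
  have hlpos : (0:ℝ) < l := by linarith
  have he : Real.exp 1 < 2.7182818286 := Real.exp_one_lt_d9
  have hepos := Real.exp_pos 1
  refine ⟨?_, ?_, ?_⟩
  · rw [show (5:ℝ) = ((5:ℕ) * 1 : ℝ) by norm_num, Real.le_log_iff_exp_le hlpos,
      Real.exp_nat_mul]
    calc Real.exp 1 ^ (5:ℕ) ≤ 2.7182818286 ^ (5:ℕ) := by
          apply pow_le_pow_left₀ hepos.le he.le
      _ ≤ 150 := by norm_num
      _ ≤ l := hl
  · have h2 : l + 1 ≤ Real.exp 1 * l := by nlinarith [Real.add_one_le_exp (1:ℝ)]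
    calc Real.log (l+1) ≤ Real.log (Real.exp 1 * l) :=
          Real.log_le_log (by linarith) h2
      _ = Real.log l + 1 := by rw [Real.log_mul hepos.ne' hlpos.ne', Real.log_exp]; ring
  · have he4 : (54:ℝ) ≤ Real.exp 1 ^ (4:ℕ) := by
      have hg : (2.7182818283:ℝ) < Real.exp 1 := Real.exp_one_gt_d9
      calc (54:ℝ) ≤ 2.7182818283 ^ (4:ℕ) := by norm_num
        _ ≤ Real.exp 1 ^ (4:ℕ) := by apply pow_le_pow_left₀ (by norm_num) hg.le
    have he4pos : (0:ℝ) < Real.exp 1 ^ (4:ℕ) := by positivity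
    have h1 : Real.log l = Real.log (l / Real.exp 1 ^ (4:ℕ)) + 4 := by
      rw [Real.log_div hlpos.ne' he4pos.ne']
      have : Real.log (Real.exp 1 ^ (4:ℕ)) = 4 := by
        rw [← Real.exp_nat_mul, Real.log_exp]; norm_num
      rw [this]; ring
    have h2 := Real.log_le_sub_one_of_pos (show (0:ℝ) < l / Real.exp 1 ^ (4:ℕ) by positivity)
    have h3 : l / Real.exp 1 ^ (4:ℕ) ≤ l / 54 := by
      apply div_le_div_of_nonneg_left hlpos.le (by norm_num) he4
    linarith

lemma stmt13_tlogt_mono {a b : ℝ} (ha : 0 < a) (hab : a ≤ b) (hb : 1 ≤ Real.log b) :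
    a * (Real.log a - 1) ≤ b * (Real.log b - 1) := by
  have h1 : Real.log a ≤ Real.log b := Real.log_le_log ha hab
  nlinarith

lemma stmt13_tlogt_ge {t : ℝ} (ht : 0 < t) : -1 ≤ t * Real.log t - t := by
  have h := Real.log_le_sub_one_of_pos (show (0:ℝ) < 1/t by positivity)
  rw [Real.log_div one_ne_zero ht.ne', Real.log_one] at h
  have h2 : t * (1/t) = 1 := by field_simp
  nlinarith [mul_le_mul_of_nonneg_left h ht.le]

lemma stmt13_caseA {l : ℝ} (hl : 150 ≤ l) :
    Real.log 2 + ((l+1)/2) * Real.log (l+1) ≤ l * (Real.log l - 1) := by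
  obtain ⟨hu, hl1, -⟩ := stmt13_log_facts hl
  have hlog2 : Real.log 2 ≤ 1 := by
    have := Real.log_two_lt_d9; linarith
  set u := Real.log l with hudef
  have hul1 : 0 ≤ (l+1)/2 := by linarith
  have key : ((l+1)/2) * Real.log (l+1) ≤ ((l+1)/2) * (u+1) :=
    mul_le_mul_of_nonneg_left hl1 hul1
  nlinarith [mul_nonneg (show (0:ℝ) ≤ u - 5 by linarith) (show (0:ℝ) ≤ l - 150 by linarith)]

lemma stmt13_caseB {l t : ℝ} (hl : 150 ≤ l) (ht2 : 2 ≤ t) (htl : t ≤ l - 1) :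
    Real.log 2 + ((l+1)/2) * Real.log (l+1) ≤ t * (Real.log t - 1) + (l - t) * l := by
  obtain ⟨hu, hl1, hu54⟩ := stmt13_log_facts hl
  have hlog2 : Real.log 2 ≤ 1 := by have := Real.log_two_lt_d9; linarith
  set u := Real.log l with hudef
  have hul1 : 0 ≤ (l+1)/2 := by linarith
  have key : ((l+1)/2) * Real.log (l+1) ≤ ((l+1)/2) * (u+1) :=
    mul_le_mul_of_nonneg_left hl1 hul1
  have hltl : l ≤ (l - t) * l := by nlinarith
  by_cases hcase : t ≤ l - u - 1
  · have h1 : (u+1) * l ≤ (l - t) * l := by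
      apply mul_le_mul_of_nonneg_right (by linarith) (by linarith)
    have h2 := stmt13_tlogt_ge (show (0:ℝ) < t by linarith)
    nlinarith [mul_nonneg (show (0:ℝ) ≤ u - 5 by linarith) (show (0:ℝ) ≤ l - 150 by linarith)]
  · push_neg at hcase
    have h9 : (9/10) * l ≤ t := by nlinarith
    have htpos : (0:ℝ) < t := by linarith
    have hlogt1 : 1 ≤ Real.log t := by
      rw [Real.le_log_iff_exp_le htpos]
      have := Real.exp_one_lt_d9; nlinarith
    have hmono := stmt13_tlogt_mono (show (0:ℝ) < (9/10)*l by linarith) h9 hlogt1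
    have hlog9 : Real.log ((9/10)*l) = Real.log (9/10) + u := by
      rw [Real.log_mul (by norm_num) (by linarith : l ≠ 0)]
    have h910 : -(1/5 : ℝ) ≤ Real.log (9/10) := by
      have h := Real.log_le_sub_one_of_pos (show (0:ℝ) < 10/9 by norm_num)
      have : Real.log (9/10) = - Real.log (10/9) := by
        rw [← Real.log_inv]; norm_num
      rw [this]; linarith
    rw [hlog9] at hmono
    nlinarith [mul_nonneg (show (0:ℝ) ≤ u - 5 by linarith) (show (0:ℝ) ≤ l - 150 by linarith)]

lemma stmt13_pow_gap {t l : ℝ} (ht : 0 ≤ t) (htl : t ≤ l) (hl1 : 1 ≤ l) {m : ℕ} (hm : 2 ≤ m) :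
    t^m + (l - t)*l ≤ l^m := by
  obtain ⟨k, rfl⟩ : ∃ k, m = k + 2 := ⟨m - 2, by omega⟩
  have h1 : t^(k+1) ≤ l^(k+1) := pow_le_pow_left₀ ht htl _
  have h2 : l^1 ≤ l^(k+1) := pow_le_pow_right₀ (by linarith) (by omega)
  have e1 : t^(k+2) = t * t^(k+1) := by ring
  have e2 : l^(k+2) = l * l^(k+1) := by ring
  have h3 : t * t^(k+1) ≤ t * l^(k+1) := mul_le_mul_of_nonneg_left h1 ht
  have h4 : (l - t) * l ≤ (l - t) * l^(k+1) := by
    apply mul_le_mul_of_nonneg_left _ (by linarith)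
    simpa using h2
  have h5 : t * l^(k+1) + (l - t) * l^(k+1) = l * l^(k+1) := by ring
  linarith

lemma stmt13_card_P_le (l : ℕ) (hl : 1 ≤ l) :
    ((Finset.range (Nat.nth Nat.Prime (l - 1) + 1)).filter Nat.Prime).card ≤ l := by
  calc ((Finset.range (Nat.nth Nat.Prime (l - 1) + 1)).filter Nat.Prime).card
      ≤ (Finset.range l).card := by
        apply Finset.card_le_card_of_injOn (fun p => Nat.count Nat.Prime p)
        · intro p hp
          simp only [Finset.mem_coe, Finset.mem_filter, Finset.mem_range] at hp
          obtain ⟨hlt, hprime⟩ := hp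
          have hle : p ≤ Nat.nth Nat.Prime (l-1) := Nat.lt_succ_iff.mp hlt
          have h1 : Nat.nth Nat.Prime (Nat.count Nat.Prime p) = p := Nat.nth_count hprime
          have h2 : Nat.count Nat.Prime p ≤ l - 1 := by
            by_contra hcon
            push_neg at hcon
            have hc : Nat.nth Nat.Prime (l-1) < Nat.nth Nat.Prime (Nat.count Nat.Prime p) :=
              (Nat.nth_lt_nth Nat.infinite_setOf_prime).2 hcon
            omega
          simp only [Finset.mem_coe, Finset.mem_range]; omega
        · intro p hp q hq hpq
          simp only [Finset.coe_filter, Set.mem_setOf_eq, Finset.mem_range] at hp hq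
          have h1 : Nat.nth Nat.Prime (Nat.count Nat.Prime p) = p := Nat.nth_count hp.2
          have h2 : Nat.nth Nat.Prime (Nat.count Nat.Prime q) = q := Nat.nth_count hq.2
          have hpq' : Nat.count Nat.Prime p = Nat.count Nat.Prime q := hpq
          rw [← h1, ← h2, hpq']
    _ = l := Finset.card_range l

lemma stmt13_card_B_le (m j : ℕ) (x : ℝ) (hx : 0 ≤ x)
    [DecidablePred fun b => b ∈ Bset m j] :
    (((Finset.range (⌊x⌋₊+1)).filter (fun b => b ∈ Bset m j)).card : ℝ)
      ≤ min x (Real.exp (((j:ℝ)+1)^m)) / (dPrimorial j : ℝ) := by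
  set d := dPrimorial j with hd
  have hdpos : 0 < d := stmt13_dPrimorial_pos j
  have hdR : (0:ℝ) < (d:ℝ) := by exact_mod_cast hdpos
  set M := min x (Real.exp (((j:ℝ)+1)^m)) with hM
  have hM0 : 0 ≤ M := le_min hx (Real.exp_pos _).le
  have hMd : 0 ≤ M / d := by positivity
  have key : ((Finset.range (⌊x⌋₊+1)).filter (fun b => b ∈ Bset m j)).card
      ≤ (Finset.Icc 1 ⌊M/(d:ℝ)⌋₊).card := by
    apply Finset.card_le_card_of_injOn (fun b => b / d)
    · intro b hb
      simp only [Finset.mem_coe, Finset.mem_filter, Finset.mem_range] at hb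
      obtain ⟨hblt, hdvd, hbge, hblt2⟩ := hb
      have hbx : (b:ℝ) ≤ x := (Nat.le_floor_iff hx).mp (Nat.lt_succ_iff.mp hblt)
      have hbM : (b:ℝ) ≤ M := le_min hbx hblt2.le
      have hbpos : 0 < b := by
        rcases Nat.eq_zero_or_pos b with h0 | h
        · subst h0
          norm_num at hbge
          linarith [Real.exp_pos ((j:ℝ)^m)]
        · exact h
      obtain ⟨k, hk⟩ := hdvd
      have hkpos : 0 < k := by
        rcases Nat.eq_zero_or_pos k with h0 | h
        · subst h0; simp at hk; omega
        · exact h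
      have hbd : b / d = k := by rw [hk, Nat.mul_div_cancel_left _ hdpos]
      have hkM : (k:ℝ) ≤ M / d := by
        rw [le_div_iff₀ hdR]
        calc (k:ℝ) * d = (b:ℝ) := by rw [hk]; push_cast; ring
          _ ≤ M := hbM
      simp only [Finset.mem_coe, Finset.mem_Icc, hbd]
      exact ⟨hkpos, Nat.le_floor hkM⟩
    · intro a ha b hb hab
      simp only [Finset.coe_filter, Set.mem_setOf_eq, Finset.mem_range] at ha hb
      have h1 : d * (a / d) = a := Nat.mul_div_cancel' ha.2.1
      have h2 : d * (b / d) = b := Nat.mul_div_cancel' hb.2.1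
      have hab' : a / d = b / d := hab
      rw [← h1, ← h2, hab']
  calc (((Finset.range (⌊x⌋₊+1)).filter (fun b => b ∈ Bset m j)).card : ℝ)
      ≤ ((Finset.Icc 1 ⌊M/(d:ℝ)⌋₊).card : ℝ) := by exact_mod_cast key
    _ = (⌊M/(d:ℝ)⌋₊ : ℝ) := by rw [Nat.card_Icc]; simp
    _ ≤ M / d := Nat.floor_le hMd

lemma stmt13_term_bound (m : ℕ) (hm : 2 ≤ m) (j l : ℕ) (hj1 : 1 ≤ j) (hjl : j ≤ l)
    (hl : 150 ≤ l) (x : ℝ) (hxl : Real.exp ((l:ℝ)^m) ≤ x) :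
    min x (Real.exp (((j:ℝ)+1)^m)) / (dPrimorial j : ℝ)
      ≤ (x/2) * Real.exp (-(((l:ℝ)+1)/2) * Real.log ((l:ℝ)+1)) := by
  have hlR : (150:ℝ) ≤ (l:ℝ) := by exact_mod_cast hl
  have hxpos : 0 < x := lt_of_lt_of_le (Real.exp_pos _) hxl
  set A := Real.exp (-(((l:ℝ)+1)/2) * Real.log ((l:ℝ)+1)) with hA
  have hApos : 0 < A := Real.exp_pos _
  have hdpos : (0:ℝ) < (dPrimorial j : ℝ) := by exact_mod_cast stmt13_dPrimorial_pos j
  have hfact : Real.exp (((j:ℝ)+1) * (Real.log ((j:ℝ)+1) - 1)) ≤ (dPrimorial j : ℝ) := by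
    have h1 := stmt13_exp_le_factorial (j+1)
    have h2 : ((j+1).factorial : ℝ) ≤ (dPrimorial j : ℝ) := by
      exact_mod_cast stmt13_factorial_le_dPrimorial j
    have hc : ((j+1 : ℕ):ℝ) = (j:ℝ)+1 := by push_cast; ring
    rw [hc] at h1
    linarith
  rcases le_or_gt l (j+1) with hcA | hcB
  · -- case A : j = l or j = l-1
    have hfl : Real.exp ((l:ℝ) * (Real.log (l:ℝ) - 1)) ≤ (dPrimorial j : ℝ) := by
      have h1 := stmt13_exp_le_factorial l
      have h2 : (l.factorial : ℝ) ≤ ((j+1).factorial : ℝ) := by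
        exact_mod_cast Nat.factorial_le (by omega : l ≤ j+1)
      have h3 : ((j+1).factorial : ℝ) ≤ (dPrimorial j : ℝ) := by
        exact_mod_cast stmt13_factorial_le_dPrimorial j
      linarith
    have hda : 2 / A ≤ (dPrimorial j : ℝ) := by
      have hcaseA := stmt13_caseA hlR
      have : 2 / A = Real.exp (Real.log 2 + (((l:ℝ)+1)/2) * Real.log ((l:ℝ)+1)) := by
        have hB : -(((l:ℝ)+1)/2) * Real.log ((l:ℝ)+1)
            = -((((l:ℝ)+1)/2) * Real.log ((l:ℝ)+1)) := by ring
        rw [hA, hB, Real.exp_neg, div_inv_eq_mul, Real.exp_add,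
          Real.exp_log (by norm_num : (0:ℝ) < 2)]
      rw [this]
      calc Real.exp (Real.log 2 + (((l:ℝ)+1)/2) * Real.log ((l:ℝ)+1))
          ≤ Real.exp ((l:ℝ) * (Real.log (l:ℝ) - 1)) := Real.exp_le_exp.2 hcaseA
        _ ≤ (dPrimorial j : ℝ) := hfl
    calc min x (Real.exp (((j:ℝ)+1)^m)) / (dPrimorial j : ℝ)
        ≤ x / (dPrimorial j : ℝ) := by
          apply div_le_div_of_nonneg_right (min_le_left _ _) hdpos.le
      _ ≤ (x/2) * A := by
          rw [div_le_iff₀ hdpos]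
          have h2A : 2 / A * ((x/2) * A) = x := by field_simp
          calc x = 2 / A * ((x/2) * A) := h2A.symm
            _ ≤ (dPrimorial j : ℝ) * ((x/2) * A) := by
                apply mul_le_mul_of_nonneg_right hda (by positivity)
            _ = (x/2) * A * (dPrimorial j : ℝ) := by ring
  · -- case B : j + 1 ≤ l - 1
    have ht2 : (2:ℝ) ≤ (j:ℝ)+1 := by
      have : (1:ℝ) ≤ (j:ℝ) := by exact_mod_cast hj1
      linarith
    have htl : (j:ℝ)+1 ≤ (l:ℝ) - 1 := by
      have : (j:ℝ)+2 ≤ (l:ℝ) := by exact_mod_cast hcB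
      linarith
    have hcaseB := stmt13_caseB hlR ht2 htl
    have hgap := stmt13_pow_gap (show (0:ℝ) ≤ (j:ℝ)+1 by positivity)
      (show (j:ℝ)+1 ≤ (l:ℝ) by linarith) (by linarith) hm
    have hkey : (((j:ℝ)+1))^m + Real.log 2 + (((l:ℝ)+1)/2) * Real.log ((l:ℝ)+1)
        ≤ ((j:ℝ)+1) * (Real.log ((j:ℝ)+1) - 1) + ((l:ℝ))^m := by
      nlinarith
    calc min x (Real.exp (((j:ℝ)+1)^m)) / (dPrimorial j : ℝ)
        ≤ Real.exp (((j:ℝ)+1)^m) / (dPrimorial j : ℝ) := by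
          apply div_le_div_of_nonneg_right (min_le_right _ _) hdpos.le
      _ ≤ (x/2) * A := by
          rw [div_le_iff₀ hdpos]
          have hx2A : Real.exp ((l:ℝ)^m) / 2 * A ≤ x / 2 * A := by
            apply mul_le_mul_of_nonneg_right _ hApos.le
            linarith
          have hmain : Real.exp (((j:ℝ)+1)^m)
              ≤ (Real.exp ((l:ℝ)^m) / 2 * A) * (dPrimorial j : ℝ) := by
            have hexp2 : Real.exp ((l:ℝ)^m) / 2 * A
                = Real.exp ((l:ℝ)^m - Real.log 2 + (-(((l:ℝ)+1)/2) * Real.log ((l:ℝ)+1))) := by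
              rw [Real.exp_add, Real.exp_sub, Real.exp_log (by norm_num : (0:ℝ) < 2), hA]
            rw [hexp2]
            calc Real.exp (((j:ℝ)+1)^m)
                ≤ Real.exp (((l:ℝ)^m - Real.log 2 + (-(((l:ℝ)+1)/2) * Real.log ((l:ℝ)+1)))
                    + ((j:ℝ)+1) * (Real.log ((j:ℝ)+1) - 1)) := by
                  apply Real.exp_le_exp.2; nlinarith
              _ ≤ Real.exp ((l:ℝ)^m - Real.log 2 + (-(((l:ℝ)+1)/2) * Real.log ((l:ℝ)+1)))
                    * (dPrimorial j : ℝ) := by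
                  rw [Real.exp_add]
                  apply mul_le_mul_of_nonneg_left hfact (Real.exp_pos _).le
          calc Real.exp (((j:ℝ)+1)^m)
              ≤ (Real.exp ((l:ℝ)^m) / 2 * A) * (dPrimorial j : ℝ) := hmain
            _ ≤ (x / 2 * A) * (dPrimorial j : ℝ) := by
                apply mul_le_mul_of_nonneg_right hx2A hdpos.le

end aux

theorem stmt_13 (m : ℕ) (hm : 2 ≤ m) :
    ∃ C : ℝ, 0 < C ∧ ∃ j₀ : ℕ, 0 < j₀ ∧
      ∀ᶠ x : ℝ in atTop, ∀ ℓ s : ℕ,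
        Real.exp ((ℓ : ℝ) ^ m) ≤ x → x < Real.exp (((ℓ : ℝ) + 1) ^ m) →
        j₀ ≤ s → s ≤ ℓ →
        ({pb : ℕ × ℕ | pb.1.Prime ∧ pb.1 ≤ Nat.nth Nat.Prime (ℓ - 1) ∧
            (∃ j : ℕ, s ≤ j ∧ j ≤ ℓ ∧ pb.2 ∈ Bset m j) ∧
            ((pb.1 + pb.2 : ℕ) : ℝ) ≤ x}.ncard : ℝ) ≤
          C * (x * (Real.log x) ^ ((2 : ℝ) / m) *
            Real.exp (-(1 / (2 * (m : ℝ))) * (Real.log x) ^ ((1 : ℝ) / m) *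
              Real.log (Real.log x))) := by
  classical
  refine ⟨1, one_pos, 1, one_pos, ?_⟩
  rw [Filter.eventually_atTop]
  refine ⟨Real.exp ((150:ℝ)^m), fun x hx ℓ s hx1 hx2 hs1 hsl => ?_⟩
  have hxpos : (0:ℝ) < x := lt_of_lt_of_le (Real.exp_pos _) hx
  -- ℓ ≥ 150
  have hl150 : 150 ≤ ℓ := by
    have h150 : (150:ℝ) < (ℓ:ℝ)+1 := by
      by_contra hcon
      push_neg at hcon
      have h1 : ((ℓ:ℝ)+1)^m ≤ (150:ℝ)^m := pow_le_pow_left₀ (by positivity) hcon m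
      have h2 : x < Real.exp ((150:ℝ)^m) := lt_of_lt_of_le hx2 (Real.exp_le_exp.2 h1)
      linarith
    have h149 : (149:ℝ) < (ℓ:ℝ) := by linarith
    have : (149:ℕ) < ℓ := by exact_mod_cast h149
    omega
  have hlR : (150:ℝ) ≤ (ℓ:ℝ) := by exact_mod_cast hl150
  have hl1 : 1 ≤ ℓ := by omega
  set L := Real.log x with hLdef
  have hL1 : ((ℓ:ℝ))^m ≤ L := (Real.le_log_iff_exp_le hxpos).2 hx1
  have hL2 : L < ((ℓ:ℝ)+1)^m := (Real.log_lt_iff_lt_exp hxpos).2 hx2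
  have hL0 : (1:ℝ) ≤ L := by
    have h1 : (1:ℝ)^m ≤ ((ℓ:ℝ))^m :=
      pow_le_pow_left₀ (by norm_num) (show (1:ℝ) ≤ (ℓ:ℝ) by linarith) m
    rw [one_pow] at h1
    linarith
  set A := Real.exp (-(((ℓ:ℝ)+1)/2) * Real.log ((ℓ:ℝ)+1)) with hA
  have hApos : (0:ℝ) < A := Real.exp_pos _
  set P := (Finset.range (Nat.nth Nat.Prime (ℓ-1) + 1)).filter Nat.Prime with hP
  set BF := (Finset.Icc s ℓ).biUnion
    (fun j => (Finset.range (⌊x⌋₊+1)).filter (fun b => b ∈ Bset m j)) with hBF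
  -- subset
  have hsub : {pb : ℕ × ℕ | pb.1.Prime ∧ pb.1 ≤ Nat.nth Nat.Prime (ℓ - 1) ∧
      (∃ j : ℕ, s ≤ j ∧ j ≤ ℓ ∧ pb.2 ∈ Bset m j) ∧
      ((pb.1 + pb.2 : ℕ) : ℝ) ≤ x} ⊆ ↑(P ×ˢ BF) := by
    rintro ⟨p, b⟩ ⟨hp, hple, ⟨j, hsj, hjl, hbB⟩, hsum⟩
    simp only [Finset.coe_product, Set.mem_prod, Finset.mem_coe, hP, hBF,
      Finset.mem_filter, Finset.mem_range, Finset.mem_biUnion, Finset.mem_Icc]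
    refine ⟨⟨by omega, hp⟩, j, ⟨hsj, hjl⟩, ?_, hbB⟩
    have hbx : (b:ℝ) ≤ x := by
      have : ((p + b : ℕ) : ℝ) ≤ x := hsum
      push_cast at this
      linarith
    have := Nat.le_floor hbx
    omega
  have hcard : ({pb : ℕ × ℕ | pb.1.Prime ∧ pb.1 ≤ Nat.nth Nat.Prime (ℓ - 1) ∧
      (∃ j : ℕ, s ≤ j ∧ j ≤ ℓ ∧ pb.2 ∈ Bset m j) ∧
      ((pb.1 + pb.2 : ℕ) : ℝ) ≤ x}.ncard : ℝ) ≤ (P.card : ℝ) * (BF.card : ℝ) := by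
    have h1 := Set.ncard_le_ncard hsub (Finset.finite_toSet _)
    rw [Set.ncard_coe_finset, Finset.card_product] at h1
    exact_mod_cast h1
  -- bound BF.card
  have hBFcard : (BF.card : ℝ) ≤ ((ℓ:ℝ)+1) * ((x/2) * A) := by
    have h1 : BF.card ≤ ∑ j ∈ Finset.Icc s ℓ,
        ((Finset.range (⌊x⌋₊+1)).filter (fun b => b ∈ Bset m j)).card :=
      Finset.card_biUnion_le
    have h2 : (∑ j ∈ Finset.Icc s ℓ,
        (((Finset.range (⌊x⌋₊+1)).filter (fun b => b ∈ Bset m j)).card : ℝ))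
        ≤ ∑ _j ∈ Finset.Icc s ℓ, ((x/2) * A) := by
      apply Finset.sum_le_sum
      intro j hj
      simp only [Finset.mem_Icc] at hj
      calc (((Finset.range (⌊x⌋₊+1)).filter (fun b => b ∈ Bset m j)).card : ℝ)
          ≤ min x (Real.exp (((j:ℝ)+1)^m)) / (dPrimorial j : ℝ) :=
            stmt13_card_B_le m j x hxpos.le
        _ ≤ (x/2) * A := stmt13_term_bound m hm j ℓ (by omega) hj.2 hl150 x hx1
    have h3 : (∑ _j ∈ Finset.Icc s ℓ, ((x/2) * A)) = ((Finset.Icc s ℓ).card : ℝ) * ((x/2)*A) := by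
      rw [Finset.sum_const, nsmul_eq_mul]
    have h4 : ((Finset.Icc s ℓ).card : ℝ) ≤ (ℓ:ℝ) + 1 := by
      rw [Nat.card_Icc]
      push_cast
      have : (ℓ + 1 - s : ℕ) ≤ ℓ + 1 := by omega
      exact_mod_cast le_trans (Nat.cast_le.2 this) (by push_cast; linarith)
    calc (BF.card : ℝ) ≤ (∑ j ∈ Finset.Icc s ℓ,
          (((Finset.range (⌊x⌋₊+1)).filter (fun b => b ∈ Bset m j)).card : ℝ)) := by
          exact_mod_cast h1
      _ ≤ ((Finset.Icc s ℓ).card : ℝ) * ((x/2)*A) := by rw [← h3]; exact h2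
      _ ≤ ((ℓ:ℝ)+1) * ((x/2)*A) := by
          apply mul_le_mul_of_nonneg_right h4 (by positivity)
  have hPcard : (P.card : ℝ) ≤ (ℓ:ℝ) := by exact_mod_cast stmt13_card_P_le ℓ hl1
  -- rpow bounds
  have hm0 : (m:ℝ) ≠ 0 := by positivity
  have hLpos : (0:ℝ) < L := by linarith
  have hpow1 : (ℓ:ℝ) ≤ L ^ ((1:ℝ)/m) := by
    have h := Real.rpow_le_rpow (by positivity : (0:ℝ) ≤ ((ℓ:ℝ))^m) hL1
      (by positivity : (0:ℝ) ≤ (1:ℝ)/m)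
    rwa [← Real.rpow_natCast (ℓ:ℝ) m, ← Real.rpow_mul (by positivity),
      mul_one_div, div_self hm0, Real.rpow_one] at h
  have hpow2 : L ^ ((1:ℝ)/m) ≤ (ℓ:ℝ) + 1 := by
    have h := Real.rpow_le_rpow hLpos.le hL2.le (by positivity : (0:ℝ) ≤ (1:ℝ)/m)
    rwa [← Real.rpow_natCast ((ℓ:ℝ)+1) m, ← Real.rpow_mul (by positivity),
      mul_one_div, div_self hm0, Real.rpow_one] at h
  have hsq : ((ℓ:ℝ))^(2:ℕ) ≤ L ^ ((2:ℝ)/m) := by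
    have he : (L ^ ((1:ℝ)/m))^(2:ℕ) = L ^ ((2:ℝ)/m) := by
      rw [← Real.rpow_natCast (L ^ ((1:ℝ)/m)) 2, ← Real.rpow_mul hLpos.le]
      congr 1
      push_cast
      ring
    rw [← he]
    exact pow_le_pow_left₀ (by positivity) hpow1 2
  have hlogL : Real.log L ≤ (m:ℝ) * Real.log ((ℓ:ℝ)+1) := by
    calc Real.log L ≤ Real.log (((ℓ:ℝ)+1)^m) := Real.log_le_log hLpos hL2.le
      _ = (m:ℝ) * Real.log ((ℓ:ℝ)+1) := by rw [Real.log_pow]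
  have hexpA : A ≤ Real.exp (-(1 / (2 * (m:ℝ))) * L ^ ((1:ℝ)/m) * Real.log L) := by
    rw [hA, Real.exp_le_exp]
    have h1 : (0:ℝ) ≤ L ^ ((1:ℝ)/m) := by positivity
    have h2 : (0:ℝ) ≤ Real.log L := Real.log_nonneg hL0
    have h3 : (0:ℝ) ≤ Real.log ((ℓ:ℝ)+1) := Real.log_nonneg (by linarith)
    have key : (1 / (2 * (m:ℝ))) * (L ^ ((1:ℝ)/m)) * Real.log L
        ≤ (((ℓ:ℝ)+1)/2) * Real.log ((ℓ:ℝ)+1) := by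
      have hmpos : (0:ℝ) < m := by positivity
      calc (1 / (2 * (m:ℝ))) * (L ^ ((1:ℝ)/m)) * Real.log L
          ≤ (1 / (2 * (m:ℝ))) * (((ℓ:ℝ)+1)) * Real.log L := by
            apply mul_le_mul_of_nonneg_right _ h2
            apply mul_le_mul_of_nonneg_left hpow2 (by positivity)
        _ ≤ (1 / (2 * (m:ℝ))) * (((ℓ:ℝ)+1)) * ((m:ℝ) * Real.log ((ℓ:ℝ)+1)) := by
            apply mul_le_mul_of_nonneg_left hlogL (by positivity)
        _ = (((ℓ:ℝ)+1)/2) * Real.log ((ℓ:ℝ)+1) := by field_simp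
    linarith
  -- final assembly
  have hchain : ((P.card : ℝ) * (BF.card : ℝ)) ≤ ((ℓ:ℝ))^(2:ℕ) * (x * A) := by
    calc (P.card : ℝ) * (BF.card : ℝ)
        ≤ (ℓ:ℝ) * (((ℓ:ℝ)+1) * ((x/2) * A)) := by
          apply mul_le_mul hPcard hBFcard (by positivity) (by positivity)
      _ ≤ ((ℓ:ℝ))^(2:ℕ) * (x * A) := by nlinarith [hApos.le, hxpos.le, hlR]
  calc ({pb : ℕ × ℕ | pb.1.Prime ∧ pb.1 ≤ Nat.nth Nat.Prime (ℓ - 1) ∧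
      (∃ j : ℕ, s ≤ j ∧ j ≤ ℓ ∧ pb.2 ∈ Bset m j) ∧
      ((pb.1 + pb.2 : ℕ) : ℝ) ≤ x}.ncard : ℝ)
      ≤ (P.card : ℝ) * (BF.card : ℝ) := hcard
    _ ≤ ((ℓ:ℝ))^(2:ℕ) * (x * A) := hchain
    _ ≤ (L ^ ((2:ℝ)/m)) * (x * Real.exp (-(1 / (2 * (m:ℝ))) * L ^ ((1:ℝ)/m) * Real.log L)) := by
        apply mul_le_mul hsq _ (by positivity) (by positivity)
        apply mul_le_mul_of_nonneg_left hexpA hxpos.le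
    _ = 1 * (x * L ^ ((2:ℝ)/m) * Real.exp (-(1 / (2 * (m:ℝ))) * L ^ ((1:ℝ)/m) * Real.log L)) := by
        ring
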